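/- The second derivative at s = 1 of s ↦ ₂F₁(1,1;s;z) equals (2 Li₂(z) + log²(1-z))/(1-z) for real z with |z| < 1; equivalently, ∑_{n=1}^∞ (H_n² + H_{n,2}) z^n = (2 Li₂(z) + log²(1-z))/(1-z). -/

import Mathlib

/-- The `n`-th harmonic number `H_n = ∑_{k=1}^n 1/k`. -/
noncomputable def H (n : ℕ) : ℝ := ∑ k ∈ Finset.range n, (1 : ℝ) / (k + 1)

/-- The `n`-th second-order harmonic number `H_{n,2} = ∑_{k=1}^n 1/k²`. -/
noncomputable def H2 (n : ℕ) : ℝ := ∑ k ∈ Finset.range n, (1 : ℝ) / ((k : ℝ) + 1) ^ 2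

/-- The dilogarithm `Li₂(z) = ∑_{n=1}^∞ z^n / n²`. -/
noncomputable def Li2 (z : ℝ) : ℝ := ∑' n : ℕ, z ^ (n + 1) / ((n : ℝ) + 1) ^ 2

/-- The Pochhammer symbol `(a)_k = a(a+1)⋯(a+k-1)` for real `a`. -/
noncomputable def poch (a : ℝ) (k : ℕ) : ℝ := ∏ j ∈ Finset.range k, (a + j)


/-! Termwise, `d/ds (n!/(s)ₙ) = -(n!/(s)ₙ) ∑_{j<n} 1/(s+j)`, so the second derivative at `s = 1`
is `∑ (H_n² + H_{n,2}) zⁿ`; for `s > 1/2` the coefficients are bounded by polynomials in `n`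
(`n!/(s)ₙ ≤ n + 1`), which justifies differentiating under the sum.
Multiplying by `1 - z` telescopes the coefficients to `2H_n/n = 2/n² + 2H_{n-1}/n`, and the
series `∑ 2H_{n-1}/n zⁿ` is the Cauchy square of `-log(1 - z) = ∑ zⁿ/n`, since
`∑_{k+l=n} 1/(kl) = 2H_{n-1}/n` by partial fractions. -/

open Finset Filter Topology Asymptotics

lemma summable_succ_pow_mul_geometric (k : ℕ) {r : ℝ} (hr : |r| < 1) :
    Summable fun n : ℕ => ((n : ℝ) + 1) ^ k * r ^ n := by
  have hO : (fun n : ℕ => ((n : ℝ) + 1) ^ k) =O[atTop] fun n => ((n ^ k : ℕ) : ℝ) := by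
    push_cast
    refine IsBigO.pow ?_ k
    refine (isBigO_refl _ _).add ?_
    refine IsBigO.of_bound 1 ((eventually_ge_atTop 1).mono fun n hn => ?_)
    simpa using (Nat.one_le_cast.mpr hn : (1 : ℝ) ≤ n)
  exact (summable_norm_mul_geometric_of_norm_lt_one' (by rwa [Real.norm_eq_abs]) hO).of_norm

lemma summable_mul_pow_of_abs_le {b : ℕ → ℝ} {z : ℝ} (hz : |z| < 1) (k : ℕ) {C : ℝ}
    (hb : ∀ n, |b n| ≤ C * ((n : ℝ) + 1) ^ k) : Summable fun n => b n * z ^ n := by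
  refine .of_norm_bounded
    ((summable_succ_pow_mul_geometric k ((abs_abs z).symm ▸ hz)).mul_left C) fun n => ?_
  rw [Real.norm_eq_abs, abs_mul, abs_pow, ← mul_assoc]
  gcongr
  exact hb n

lemma hasDerivAt_tsum_mul_pow {U : Set ℝ} (hU : IsOpen U) (hU' : IsPreconnected U)
    {c c' : ℕ → ℝ → ℝ} {z : ℝ} (hz : |z| < 1) (k : ℕ) {C : ℝ}
    (hc : ∀ n, ∀ s ∈ U, HasDerivAt (c n) (c' n s) s)
    (hc' : ∀ n, ∀ s ∈ U, |c' n s| ≤ C * ((n : ℝ) + 1) ^ k)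
    {s₀ : ℝ} (hs₀ : s₀ ∈ U) (hsum : Summable fun n => c n s₀ * z ^ n) {s : ℝ} (hs : s ∈ U) :
    HasDerivAt (fun t => ∑' n, c n t * z ^ n) (∑' n, c' n s * z ^ n) s := by
  refine hasDerivAt_tsum_of_isPreconnected
    ((summable_succ_pow_mul_geometric k ((abs_abs z).symm ▸ hz)).mul_left C) hU hU'
    (fun n t ht => (hc n t ht).mul_const _) (fun n t ht => ?_) hs₀ hsum hs
  rw [Real.norm_eq_abs, abs_mul, abs_pow, ← mul_assoc]
  gcongr
  exact hc' n t ht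

lemma iteratedDeriv_two_eq_of_hasDerivAt {𝕜 : Type*} [NontriviallyNormedField 𝕜] {f f' : 𝕜 → 𝕜}
    {x a : 𝕜} (hf : ∀ᶠ y in 𝓝 x, HasDerivAt f (f' y) y) (hf' : HasDerivAt f' a x) :
    iteratedDeriv 2 f x = a := by
  have hderiv : deriv f =ᶠ[𝓝 x] f' := hf.mono fun y hy => hy.deriv
  rw [iteratedDeriv_succ, iteratedDeriv_one, hderiv.deriv_eq, hf'.deriv]

lemma hasSum_sub_mul_pow_succ {R : Type*} [Ring R] [TopologicalSpace R] [IsTopologicalRing R]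
    {a : ℕ → R} {z S : R} (h : HasSum (fun n => a n * z ^ n) S) :
    HasSum (fun n => (a (n + 1) - a n) * z ^ (n + 1)) (S * (1 - z) - a 0) := by
  have h₁ := (hasSum_nat_add_iff' 1).mpr h
  have h₂ := h₁.sub (h.mul_right z)
  rw [range_one, sum_singleton, pow_zero, mul_one] at h₂
  rw [show S * (1 - z) - a 0 = S - a 0 - S * z by noncomm_ring]
  exact h₂.congr_fun fun n => by rw [pow_succ]; noncomm_ring

noncomputable def shiftedH (n : ℕ) (s : ℝ) : ℝ := ∑ j ∈ range n, (s + j)⁻¹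

noncomputable def shiftedH2 (n : ℕ) (s : ℝ) : ℝ := ∑ j ∈ range n, ((s + j) ^ 2)⁻¹

noncomputable def factorialDivPoch (n : ℕ) (s : ℝ) : ℝ := (n.factorial : ℝ) / poch s n

lemma shiftedH_one (n : ℕ) : shiftedH n 1 = H n :=
  sum_congr rfl fun k _ => by rw [one_div, add_comm]

lemma shiftedH2_one (n : ℕ) : shiftedH2 n 1 = H2 n :=
  sum_congr rfl fun k _ => by rw [one_div, add_comm]

lemma poch_succ (s : ℝ) (n : ℕ) : poch s (n + 1) = poch s n * (s + n) :=
  prod_range_succ _ n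

lemma poch_pos {s : ℝ} (hs : 0 < s) (n : ℕ) : 0 < poch s n :=
  prod_pos fun j _ => by positivity

lemma poch_one (n : ℕ) : poch 1 n = n.factorial := by
  rw [poch, ← prod_range_add_one_eq_factorial]
  push_cast
  exact prod_congr rfl fun j _ => add_comm _ _

lemma factorialDivPoch_one (n : ℕ) : factorialDivPoch n 1 = 1 := by
  rw [factorialDivPoch, poch_one, div_self (by positivity)]

lemma hasDerivAt_poch (n : ℕ) {s : ℝ} (hs : 0 < s) :
    HasDerivAt (poch · n) (poch s n * shiftedH n s) s := by
  induction n with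
  | zero => simpa [poch, shiftedH] using hasDerivAt_const s (1 : ℝ)
  | succ n ih =>
    have hne : s + n ≠ 0 := by positivity
    simp_rw [poch_succ]
    refine (ih.fun_mul ((hasDerivAt_id' s).add_const (n : ℝ))).congr_deriv ?_
    simp only [shiftedH, sum_range_succ]
    field_simp

lemma hasDerivAt_shiftedH (n : ℕ) {s : ℝ} (hs : 0 < s) :
    HasDerivAt (shiftedH n) (-shiftedH2 n s) s := by
  have h := HasDerivAt.fun_sum fun (j : ℕ) (_ : j ∈ range n) =>
    ((hasDerivAt_id' s).add_const (j : ℝ)).fun_inv (by positivity)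
  refine h.congr_deriv ?_
  simp only [shiftedH2, ← sum_neg_distrib]
  exact sum_congr rfl fun j _ => by rw [neg_div, one_div]

lemma hasDerivAt_factorialDivPoch (n : ℕ) {s : ℝ} (hs : 0 < s) :
    HasDerivAt (factorialDivPoch n) (-(factorialDivPoch n s * shiftedH n s)) s := by
  have := (poch_pos hs n).ne'
  refine ((hasDerivAt_const s (n.factorial : ℝ)).fun_div (hasDerivAt_poch n hs) this).congr_deriv ?_
  rw [factorialDivPoch]
  field_simp
  ring

lemma hasDerivAt_neg_factorialDivPoch_mul_shiftedH (n : ℕ) {s : ℝ} (hs : 0 < s) :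
    HasDerivAt (fun t => -(factorialDivPoch n t * shiftedH n t))
      (factorialDivPoch n s * (shiftedH n s ^ 2 + shiftedH2 n s)) s :=
  ((hasDerivAt_factorialDivPoch n hs).fun_mul (hasDerivAt_shiftedH n hs)).fun_neg.congr_deriv
    (by ring)

section Bounds

variable {s : ℝ}

lemma factorialDivPoch_nonneg (hs : 0 < s) (n : ℕ) : 0 ≤ factorialDivPoch n s :=
  div_nonneg (Nat.cast_nonneg _) (poch_pos hs n).le

lemma factorial_le_succ_mul_poch (hs : 1 / 2 ≤ s) (n : ℕ) :
    (n.factorial : ℝ) ≤ (n + 1) * poch s n := by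
  induction n with
  | zero => simp [poch]
  | succ n ih =>
    have hp := poch_pos (show 0 < s by linarith) n
    have hn : (0 : ℝ) ≤ n := n.cast_nonneg
    have hstep : ((n : ℝ) + 1) ^ 2 ≤ (n + 2) * (s + n) := by nlinarith
    rw [Nat.factorial_succ, poch_succ]
    push_cast
    nlinarith [mul_le_mul_of_nonneg_left ih (by positivity : (0 : ℝ) ≤ n + 1)]

lemma factorialDivPoch_le (hs : 1 / 2 ≤ s) (n : ℕ) : factorialDivPoch n s ≤ n + 1 :=
  div_le_of_le_mul₀ (poch_pos (by linarith) n).le (by positivity)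
    (factorial_le_succ_mul_poch hs n)

lemma shiftedH_nonneg (hs : 0 < s) (n : ℕ) : 0 ≤ shiftedH n s :=
  sum_nonneg fun j _ => by positivity

lemma shiftedH2_nonneg (hs : 0 < s) (n : ℕ) : 0 ≤ shiftedH2 n s :=
  sum_nonneg fun j _ => by positivity

lemma shiftedH_le (hs : 1 / 2 ≤ s) (n : ℕ) : shiftedH n s ≤ 2 * n := by
  have h : ∀ j ∈ range n, (s + j)⁻¹ ≤ 2 := fun j _ => by
    rw [inv_le_comm₀ (by positivity) two_pos]
    linarith [(j.cast_nonneg : (0 : ℝ) ≤ j)]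
  simpa [shiftedH, mul_comm] using sum_le_card_nsmul _ _ _ h

lemma shiftedH2_le (hs : 1 / 2 ≤ s) (n : ℕ) : shiftedH2 n s ≤ 4 * n := by
  have h : ∀ j ∈ range n, ((s + j) ^ 2)⁻¹ ≤ 4 := fun j _ => by
    rw [inv_le_comm₀ (by positivity) four_pos]
    nlinarith [(j.cast_nonneg : (0 : ℝ) ≤ j)]
  simpa [shiftedH2, mul_comm] using sum_le_card_nsmul _ _ _ h

lemma abs_neg_factorialDivPoch_mul_shiftedH_le (hs : 1 / 2 ≤ s) (n : ℕ) :
    |-(factorialDivPoch n s * shiftedH n s)| ≤ 2 * ((n : ℝ) + 1) ^ 2 := by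
  have hs₀ : 0 < s := by linarith
  rw [abs_neg, abs_of_nonneg (mul_nonneg (factorialDivPoch_nonneg hs₀ n) (shiftedH_nonneg hs₀ n))]
  calc factorialDivPoch n s * shiftedH n s ≤ (n + 1) * (2 * n) :=
        mul_le_mul (factorialDivPoch_le hs n) (shiftedH_le hs n) (shiftedH_nonneg hs₀ n)
          (by positivity)
    _ ≤ 2 * ((n : ℝ) + 1) ^ 2 := by nlinarith

lemma abs_factorialDivPoch_mul_shiftedH_sq_add_shiftedH2_le (hs : 1 / 2 ≤ s) (n : ℕ) :
    |factorialDivPoch n s * (shiftedH n s ^ 2 + shiftedH2 n s)| ≤ 4 * ((n : ℝ) + 1) ^ 3 := by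
  have hs₀ : 0 < s := by linarith
  have hL := shiftedH_nonneg hs₀ n
  have hQ := shiftedH2_nonneg hs₀ n
  rw [abs_of_nonneg (mul_nonneg (factorialDivPoch_nonneg hs₀ n) (by positivity))]
  have hLQ : shiftedH n s ^ 2 + shiftedH2 n s ≤ 4 * n * (n + 1) := by
    nlinarith [pow_le_pow_left₀ hL (shiftedH_le hs n) 2, shiftedH2_le hs n]
  calc factorialDivPoch n s * (shiftedH n s ^ 2 + shiftedH2 n s) ≤ (n + 1) * (4 * n * (n + 1)) :=
        mul_le_mul (factorialDivPoch_le hs n) hLQ (by positivity) (by positivity)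
    _ ≤ 4 * ((n : ℝ) + 1) ^ 3 := by nlinarith

end Bounds

lemma iteratedDeriv_two_tsum_factorialDivPoch_mul_pow_one {z : ℝ} (hz : |z| < 1) :
    iteratedDeriv 2 (fun s => ∑' n, factorialDivPoch n s * z ^ n) 1
      = ∑' n, (H n ^ 2 + H2 n) * z ^ n := by
  set U := Set.Ioi (1 / 2 : ℝ)
  have hU : IsOpen U := isOpen_Ioi
  have hU' : IsPreconnected U := isPreconnected_Ioi
  have h1 : (1 : ℝ) ∈ U := by norm_num [U]
  have hpos : ∀ s ∈ U, 0 < s := fun s hs => by linarith [Set.mem_Ioi.mp hs]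
  have hsum₀ : Summable fun n => factorialDivPoch n 1 * z ^ n := by
    simpa [factorialDivPoch_one] using summable_geometric_of_abs_lt_one hz
  have hsum₁ : Summable fun n => -(factorialDivPoch n 1 * shiftedH n 1) * z ^ n :=
    summable_mul_pow_of_abs_le hz 2 fun n => abs_neg_factorialDivPoch_mul_shiftedH_le (by norm_num) n
  have hderiv₁ : ∀ s ∈ U, HasDerivAt (fun t => ∑' n, factorialDivPoch n t * z ^ n)
      (∑' n, -(factorialDivPoch n s * shiftedH n s) * z ^ n) s := fun s hs =>
    hasDerivAt_tsum_mul_pow hU hU' hz 2 (fun n t ht => hasDerivAt_factorialDivPoch n (hpos t ht))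
      (fun n t ht => abs_neg_factorialDivPoch_mul_shiftedH_le (le_of_lt ht) n) h1 hsum₀ hs
  have hderiv₂ : HasDerivAt (fun t => ∑' n, -(factorialDivPoch n t * shiftedH n t) * z ^ n)
      (∑' n, factorialDivPoch n 1 * (shiftedH n 1 ^ 2 + shiftedH2 n 1) * z ^ n) 1 :=
    hasDerivAt_tsum_mul_pow hU hU' hz 3 (c := fun n t => -(factorialDivPoch n t * shiftedH n t))
      (fun n t ht => hasDerivAt_neg_factorialDivPoch_mul_shiftedH n (hpos t ht))
      (fun n t ht => abs_factorialDivPoch_mul_shiftedH_sq_add_shiftedH2_le (le_of_lt ht) n) h1 hsum₁ h1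
  rw [iteratedDeriv_two_eq_of_hasDerivAt (eventually_of_mem (hU.mem_nhds h1) hderiv₁) hderiv₂]
  simp only [factorialDivPoch_one, shiftedH_one, shiftedH2_one, one_mul]

lemma summable_H_sq_add_H2_mul_pow {z : ℝ} (hz : |z| < 1) :
    Summable fun n => (H n ^ 2 + H2 n) * z ^ n :=
  summable_mul_pow_of_abs_le hz 3 fun n => by
    simpa [factorialDivPoch_one, shiftedH_one, shiftedH2_one] using
      abs_factorialDivPoch_mul_shiftedH_sq_add_shiftedH2_le (s := 1) (by norm_num) n

lemma H_zero : H 0 = 0 := sum_range_zero _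

lemma H2_zero : H2 0 = 0 := sum_range_zero _

lemma H_succ (n : ℕ) : H (n + 1) = H n + 1 / (n + 1) := sum_range_succ _ n

lemma H2_succ (n : ℕ) : H2 (n + 1) = H2 n + 1 / ((n : ℝ) + 1) ^ 2 := sum_range_succ _ n

lemma H_sq_add_H2_succ_sub (n : ℕ) :
    (H (n + 1) ^ 2 + H2 (n + 1)) - (H n ^ 2 + H2 n) = 2 * H (n + 1) / (n + 1) := by
  rw [H_succ, H2_succ]
  field_simp
  ring

lemma sum_range_one_div_mul_reflect (n : ℕ) :
    ∑ k ∈ range (n + 1), 1 / (((k : ℝ) + 1) * ((n - k : ℕ) + 1)) = 2 * H (n + 1) / (n + 2) := by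
  have hsplit : ∀ k ∈ range (n + 1), 1 / (((k : ℝ) + 1) * ((n - k : ℕ) + 1))
      = (1 / ((k : ℝ) + 1) + 1 / ((n - k : ℕ) + 1)) / (n + 2) := fun k hk => by
    have hk : k ≤ n := Nat.lt_succ_iff.mp (mem_range.mp hk)
    rw [Nat.cast_sub hk]
    have : (n : ℝ) - k + 1 ≠ 0 := by
      have : (k : ℝ) ≤ n := by exact_mod_cast hk
      linarith
    field_simp
    ring
  have hreflect := sum_range_reflect (fun k => 1 / ((k : ℝ) + 1)) (n + 1)
  rw [add_tsub_cancel_right] at hreflect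
  rw [sum_congr rfl hsplit, ← sum_div, sum_add_distrib, hreflect, H]
  ring

lemma hasSum_log_one_sub_sq {z : ℝ} (hz : |z| < 1) :
    HasSum (fun n : ℕ => 2 * H n / (n + 1) * z ^ (n + 1)) (Real.log (1 - z) ^ 2) := by
  set f : ℕ → ℝ := fun n => z ^ (n + 1) / (n + 1)
  have hf : HasSum f (-Real.log (1 - z)) := Real.hasSum_pow_div_log_of_abs_lt_one hz
  have hf_norm : Summable fun n => ‖f n‖ :=
    (Real.hasSum_pow_div_log_of_abs_lt_one ((abs_abs z).symm ▸ hz)).summable.congr fun n => by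
      rw [Real.norm_eq_abs, abs_div, abs_pow, abs_of_pos (n.cast_add_one_pos (α := ℝ))]
  have hcauchy := hasSum_sum_range_mul_of_summable_norm hf_norm hf_norm
  rw [hf.tsum_eq, neg_mul_neg, ← sq] at hcauchy
  rw [← hasSum_nat_add_iff' 1, sum_range_one, H_zero, mul_zero, zero_div, zero_mul, sub_zero]
  refine hcauchy.congr_fun fun n => ?_
  have hterm : ∀ k ∈ range (n + 1),
      f k * f (n - k) = 1 / (((k : ℝ) + 1) * ((n - k : ℕ) + 1)) * z ^ (n + 2) := fun k hk => by
    have hk : k ≤ n := Nat.lt_succ_iff.mp (mem_range.mp hk)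
    rw [div_mul_div_comm, ← pow_add, show k + 1 + (n - k + 1) = n + 2 by omega, one_div_mul_eq_div]
  rw [sum_congr rfl hterm, ← sum_mul, sum_range_one_div_mul_reflect]
  push_cast
  ring

lemma hasSum_Li2 {z : ℝ} (hz : |z| ≤ 1) :
    HasSum (fun n : ℕ => z ^ (n + 1) / ((n : ℝ) + 1) ^ 2) (Li2 z) := by
  refine Summable.hasSum (.of_norm_bounded
    ((summable_nat_add_iff 1).mpr (Real.summable_one_div_nat_pow.mpr one_lt_two)) fun n => ?_)
  rw [norm_div, norm_pow, norm_pow, Real.norm_eq_abs, Real.norm_of_nonneg n.cast_add_one_pos.le]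
  push_cast
  gcongr
  exact pow_le_one₀ (abs_nonneg z) hz

lemma hasSum_two_mul_H_succ_div {z : ℝ} (hz : |z| < 1) :
    HasSum (fun n : ℕ => 2 * H (n + 1) / (n + 1) * z ^ (n + 1))
      (2 * Li2 z + Real.log (1 - z) ^ 2) := by
  refine (((hasSum_Li2 hz.le).mul_left 2).add (hasSum_log_one_sub_sq hz)).congr_fun fun n => ?_
  rw [H_succ]
  field_simp
  ring

lemma tsum_H_sq_add_H2_mul_pow {z : ℝ} (hz : |z| < 1) :
    ∑' n, (H n ^ 2 + H2 n) * z ^ n = (2 * Li2 z + Real.log (1 - z) ^ 2) / (1 - z) := by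
  have h := hasSum_sub_mul_pow_succ (summable_H_sq_add_H2_mul_pow hz).hasSum
  simp only [H_sq_add_H2_succ_sub] at h
  have := h.unique (hasSum_two_mul_H_succ_div hz)
  have hz1 : 1 - z ≠ 0 := by linarith [(abs_lt.mp hz).2]
  rw [eq_div_iff hz1, ← this, H_zero, H2_zero]
  ring

/-- The second derivative at `s = 1` of `s ↦ ₂F₁(1,1;s;z) = ∑_{n≥0} (n!/(s)_n) z^n` equals
`(2 Li₂(z) + log²(1-z))/(1-z)`; equivalently
`∑_{n=1}^∞ (H_n² + H_{n,2}) z^n = (2 Li₂(z) + log²(1-z))/(1-z)`. -/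
theorem second_deriv_hypergeom (z : ℝ) (hz : |z| < 1) :
    iteratedDeriv 2 (fun s : ℝ => ∑' n : ℕ, (Nat.factorial n : ℝ) / poch s n * z ^ n) 1
        = (2 * Li2 z + Real.log (1 - z) ^ 2) / (1 - z) ∧
      ∑' n : ℕ, (H (n + 1) ^ 2 + H2 (n + 1)) * z ^ (n + 1)
        = (2 * Li2 z + Real.log (1 - z) ^ 2) / (1 - z) := by
  have hval := tsum_H_sq_add_H2_mul_pow hz
  have hshift : ∑' n : ℕ, (H (n + 1) ^ 2 + H2 (n + 1)) * z ^ (n + 1)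
      = ∑' n, (H n ^ 2 + H2 n) * z ^ n := by
    rw [(summable_H_sq_add_H2_mul_pow hz).tsum_eq_zero_add, H_zero, H2_zero]
    ring
  exact ⟨(iteratedDeriv_two_tsum_factorialDivPoch_mul_pow_one hz).trans hval, hshift.trans hval⟩
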